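/- For Neumann-type conditions b₁(ξ) = −iξ, b₂(ξ) = iξ³, and ρ₁ = −conj(ρ₂) the roots with positive imaginary part of ξ ↦ σ⁴ + (ξ²+r²)², one has ρ₁ρ₂³ − ρ₂ρ₁³ = −2iσ²√(σ⁴ + r⁴); in particular the Lopatinskiĭ–Šapiro determinant is nonzero when σ ≠ 0. -/

import Mathlib

/-!
With `S = √(σ⁴ + r⁴)` one has `a² + b² = S` and `ab = √(S² - r⁴)/2 = σ²/2`, while for
`ρ₁ = -a + ib`, `ρ₂ = a + ib` the factorisation
`ρ₁ρ₂³ - ρ₂ρ₁³ = ρ₁ρ₂ (ρ₂ - ρ₁)(ρ₂ + ρ₁) = -(a² + b²) · 2a · 2ib` gives `-2iσ²S`.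
The Lopatinskiĭ–Šapiro determinant of `b₁ = -iξ`, `b₂ = iξ³` is exactly this expression.
-/

open Complex

lemma sq_le_sqrt_pow_four_add_pow_four (σ r : ℝ) : r ^ 2 ≤ √(σ ^ 4 + r ^ 4) :=
  (Real.le_sqrt (sq_nonneg r) (by positivity)).2 (by nlinarith [pow_nonneg (sq_nonneg σ) 2])

lemma sq_sqrt_half_sub_add_sq_sqrt_half_add {S t : ℝ} (ht : t ≤ S) (ht' : -t ≤ S) :
    √((S - t) / 2) ^ 2 + √((S + t) / 2) ^ 2 = S := by
  rw [Real.sq_sqrt (by linarith), Real.sq_sqrt (by linarith)]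
  ring

lemma sqrt_half_sub_mul_sqrt_half_add {S t : ℝ} (ht : t ≤ S) :
    √((S - t) / 2) * √((S + t) / 2) = √(S ^ 2 - t ^ 2) / 2 := by
  rw [← Real.sqrt_mul (by linarith), show (S - t) / 2 * ((S + t) / 2) = (S ^ 2 - t ^ 2) / 2 ^ 2 by ring,
    Real.sqrt_div' _ (sq_nonneg 2), Real.sqrt_sq zero_le_two]

lemma neg_add_mul_I_mul_pow_three_sub (a b : ℂ) :
    (-a + b * I) * (a + b * I) ^ 3 - (a + b * I) * (-a + b * I) ^ 3
      = -4 * I * (a * b) * (a ^ 2 + b ^ 2) := by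
  linear_combination 4 * a * b ^ 3 * I * I_sq

lemma det_neumann_eq (ρ₁ ρ₂ : ℂ) :
    !![-I * ρ₁, I * ρ₁ ^ 3; -I * ρ₂, I * ρ₂ ^ 3].det = ρ₁ * ρ₂ ^ 3 - ρ₂ * ρ₁ ^ 3 := by
  rw [Matrix.det_fin_two_of]
  linear_combination (ρ₁ ^ 3 * ρ₂ - ρ₁ * ρ₂ ^ 3) * I_sq

theorem stmt7_general (σ r : ℝ)
    (a b : ℝ)
    (ha : a = Real.sqrt ((Real.sqrt (σ ^ 4 + r ^ 4) - r ^ 2) / 2))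
    (hb : b = Real.sqrt ((Real.sqrt (σ ^ 4 + r ^ 4) + r ^ 2) / 2))
    (ρ₁ ρ₂ : ℂ)
    (hρ₁ : ρ₁ = -(a : ℂ) + (b : ℂ) * Complex.I)
    (hρ₂ : ρ₂ = (a : ℂ) + (b : ℂ) * Complex.I)
    (b₁ b₂ : ℂ → ℂ) (hb₁ : ∀ ξ, b₁ ξ = -Complex.I * ξ) (hb₂ : ∀ ξ, b₂ ξ = Complex.I * ξ ^ 3) :
    ρ₁ * ρ₂ ^ 3 - ρ₂ * ρ₁ ^ 3
      = -2 * Complex.I * (σ : ℂ) ^ 2 * ((Real.sqrt (σ ^ 4 + r ^ 4) : ℝ) : ℂ) ∧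
    (σ ≠ 0 → Matrix.det !![b₁ ρ₁, b₂ ρ₁; b₁ ρ₂, b₂ ρ₂] ≠ 0) := by
  set S := √(σ ^ 4 + r ^ 4) with hS
  have hrS : r ^ 2 ≤ S := sq_le_sqrt_pow_four_add_pow_four σ r
  have hsum : a ^ 2 + b ^ 2 = S := by
    rw [ha, hb]
    exact sq_sqrt_half_sub_add_sq_sqrt_half_add hrS (by linarith [sq_nonneg r])
  have hprod : a * b = σ ^ 2 / 2 := by
    rw [ha, hb, sqrt_half_sub_mul_sqrt_half_add hrS, hS, Real.sq_sqrt (by positivity),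
      show σ ^ 4 + r ^ 4 - (r ^ 2) ^ 2 = (σ ^ 2) ^ 2 by ring, Real.sqrt_sq (sq_nonneg σ)]
  have key : ρ₁ * ρ₂ ^ 3 - ρ₂ * ρ₁ ^ 3 = -2 * I * (σ : ℂ) ^ 2 * (S : ℂ) := by
    rw [hρ₁, hρ₂, neg_add_mul_I_mul_pow_three_sub, ← hsum]
    push_cast [← ofReal_mul, hprod]
    ring
  refine ⟨key, fun hσ => ?_⟩
  have hSpos : 0 < S := Real.sqrt_pos.2 (by positivity)
  simp only [hb₁, hb₂]
  rw [det_neumann_eq, key]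
  exact mul_ne_zero (mul_ne_zero (by simp) (pow_ne_zero 2 (ofReal_ne_zero.2 hσ)))
    (ofReal_ne_zero.2 hSpos.ne')

theorem stmt7 (σ r : ℝ) (hr : 0 ≤ r)
    (a b : ℝ)
    (ha : a = Real.sqrt ((Real.sqrt (σ ^ 4 + r ^ 4) - r ^ 2) / 2))
    (hb : b = Real.sqrt ((Real.sqrt (σ ^ 4 + r ^ 4) + r ^ 2) / 2))
    (ρ₁ ρ₂ : ℂ)
    (hρ₁ : ρ₁ = -(a : ℂ) + (b : ℂ) * Complex.I)
    (hρ₂ : ρ₂ = (a : ℂ) + (b : ℂ) * Complex.I)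
    (b₁ b₂ : ℂ → ℂ) (hb₁ : ∀ ξ, b₁ ξ = -Complex.I * ξ) (hb₂ : ∀ ξ, b₂ ξ = Complex.I * ξ ^ 3) :
    ρ₁ * ρ₂ ^ 3 - ρ₂ * ρ₁ ^ 3
      = -2 * Complex.I * (σ : ℂ) ^ 2 * ((Real.sqrt (σ ^ 4 + r ^ 4) : ℝ) : ℂ) ∧
    (σ ≠ 0 → Matrix.det !![b₁ ρ₁, b₂ ρ₁; b₁ ρ₂, b₂ ρ₂] ≠ 0) :=
  stmt7_general σ r a b ha hb ρ₁ ρ₂ hρ₁ hρ₂ b₁ b₂ hb₁ hb₂
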